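/- arXiv:1010.6103 — 10 statements merged into one kernel-verified Lean document; each statement's English description precedes it below -/
import Mathlib

section
/- Let H be a complex Hilbert space with dimension greater than one. There is no unit vector β ∈ H and linear isometry U : H ⊗ H → H ⊗ H such that U(ψ ⊗ β) = ψ ⊗ ψ for all unit vectors ψ ∈ H. -/
open scoped TensorProduct

local notation "⟪" x ", " y "⟫" => @inner ℂ _ _ x y

/-!
A cloning map that preserves the inner product of `H ⊗ H` turns
`⟪ψ ⊗ β, φ ⊗ β⟫ = ⟪ψ, φ⟫` into `⟪ψ ⊗ ψ, φ ⊗ φ⟫ = ⟪ψ, φ⟫²`, so any two cloned unit vectors have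
inner product `0` or `1`. The unit vectors `ψ` and `-ψ` have inner product `-1`.
-/

section Cloning

variable {𝕜 E : Type*} [RCLike 𝕜] [NormedAddCommGroup E] [InnerProductSpace 𝕜 E]

theorem inner_eq_sq_of_clones {β ψ φ : E} {U : E ⊗[𝕜] E → E ⊗[𝕜] E}
    {ip : E ⊗[𝕜] E → E ⊗[𝕜] E → 𝕜} (hβ : ‖β‖ = 1)
    (hip : ∀ a b c d : E, ip (a ⊗ₜ b) (c ⊗ₜ d) = inner 𝕜 a c * inner 𝕜 b d)
    (hU : ∀ s t, ip (U s) (U t) = ip s t)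
    (hψ : U (ψ ⊗ₜ β) = ψ ⊗ₜ ψ) (hφ : U (φ ⊗ₜ β) = φ ⊗ₜ φ) :
    inner 𝕜 ψ φ = inner 𝕜 ψ φ ^ 2 := by
  have hββ : inner 𝕜 β β = (1 : 𝕜) := by simp [hβ]
  have := hU (ψ ⊗ₜ β) (φ ⊗ₜ β)
  rw [hψ, hφ, hip, hip, hββ] at this
  linear_combination -this

end Cloning

/-- Traditional quantum no-cloning theorem: if `dim H > 1`, there is no unit vector `β`
and linear isometry `U : H ⊗ H → H ⊗ H` (isometry with respect to the induced inner
product `ip` on the tensor product, satisfying `ip (a ⊗ b) (c ⊗ d) = ⟪a,c⟫⟪b,d⟫`)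
with `U (ψ ⊗ β) = ψ ⊗ ψ` for all unit vectors `ψ`. -/
theorem no_cloning_traditional_quantum
    {H : Type*} [NormedAddCommGroup H] [InnerProductSpace ℂ H]
    (hdim : 1 < Module.rank ℂ H) :
    ¬ ∃ (β : H) (U : (H ⊗[ℂ] H) →ₗ[ℂ] (H ⊗[ℂ] H)) (ip : (H ⊗[ℂ] H) → (H ⊗[ℂ] H) → ℂ),
      ‖β‖ = 1 ∧
      (∀ a b c d : H, ip (a ⊗ₜ[ℂ] b) (c ⊗ₜ[ℂ] d) = ⟪a, c⟫ * ⟪b, d⟫) ∧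
      (∀ s t : H ⊗[ℂ] H, ip (U s) (U t) = ip s t) ∧
      (∀ ψ : H, ‖ψ‖ = 1 → U (ψ ⊗ₜ[ℂ] β) = ψ ⊗ₜ[ℂ] ψ) := by
  rintro ⟨β, U, ip, hβ, hip, hU, hclone⟩
  have : Nontrivial H := rank_pos_iff_nontrivial.mp (zero_lt_one.trans hdim)
  obtain ⟨ψ, hψ⟩ := exists_norm_eq H zero_le_one
  have hinner : ⟪ψ, -ψ⟫ = -1 := by simp [hψ]
  have h := inner_eq_sq_of_clones hβ hip hU (hclone ψ hψ) (hclone (-ψ) (by rwa [norm_neg]))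
  rw [hinner] at h
  norm_num at h
end

section
/- Let H be a complex Hilbert space of dimension greater than one. There is no unit vector β ∈ H, complex Hilbert space K, unit vector ρ ∈ K, function f from unit vectors of H to unit vectors of K, and linear isometry U : H ⊗ H ⊗ K → H ⊗ H ⊗ K such that U(ψ ⊗ β ⊗ ρ) = ψ ⊗ ψ ⊗ f(ψ) for all unit vectors ψ ∈ H. -/
/-!
Cloning preserves inner products only up to a square: since `U` is an isometry,
`⟪ψ, φ⟫ = ⟪ψ, φ⟫ ^ 2 * ⟪f ψ, f φ⟫` for all unit vectors `ψ, φ`. When `dim H > 1` there are unit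
vectors with `⟪ψ, φ⟫ = 3 / 5`, which forces `⟪f ψ, f φ⟫ = 5 / 3`, against Cauchy–Schwarz.
-/

open scoped TensorProduct

local notation "⟪" x ", " y "⟫" => @inner ℂ _ _ x y

section InnerProductSpace

variable {𝕜 E : Type*} [RCLike 𝕜] [NormedAddCommGroup E] [InnerProductSpace 𝕜 E]

theorem exists_orthonormal_pair_of_one_lt_rank (hdim : 1 < Module.rank 𝕜 E) :
    ∃ e₁ e₂ : E, ‖e₁‖ = 1 ∧ ‖e₂‖ = 1 ∧ inner 𝕜 e₁ e₂ = 0 := by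
  have : Nontrivial E := rank_pos_iff_nontrivial (R := 𝕜).mp (one_pos.trans hdim)
  obtain ⟨x, hx⟩ := exists_ne (0 : E)
  obtain ⟨y, hxy⟩ := exists_linearIndependent_pair_of_one_lt_rank hdim hx
  have hon := InnerProductSpace.gramSchmidtNormed_orthonormal (𝕜 := 𝕜) hxy
  exact ⟨_, _, hon.1 0, hon.1 1, hon.2 (by decide)⟩

theorem exists_norm_eq_one_inner_eq_three_fifths (hdim : 1 < Module.rank 𝕜 E) :
    ∃ ψ φ : E, ‖ψ‖ = 1 ∧ ‖φ‖ = 1 ∧ inner 𝕜 ψ φ = 3 / 5 := by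
  obtain ⟨e₁, e₂, he₁, he₂, h₁₂⟩ := exists_orthonormal_pair_of_one_lt_rank hdim
  refine ⟨e₁, (3 / 5 : 𝕜) • e₁ + (4 / 5 : 𝕜) • e₂, he₁, ?_, ?_⟩
  · have horth : inner 𝕜 ((3 / 5 : 𝕜) • e₁) ((4 / 5 : 𝕜) • e₂) = 0 := by
      simp [inner_smul_left, inner_smul_right, h₁₂]
    have hsq := norm_add_sq_eq_norm_sq_add_norm_sq_of_inner_eq_zero _ _ horth
    simp only [norm_smul, he₁, he₂, mul_one] at hsq
    have h3 : ‖(3 / 5 : 𝕜)‖ = 3 / 5 := by norm_num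
    have h4 : ‖(4 / 5 : 𝕜)‖ = 4 / 5 := by norm_num
    rw [h3, h4] at hsq
    nlinarith [norm_nonneg ((3 / 5 : 𝕜) • e₁ + (4 / 5 : 𝕜) • e₂)]
  · simp [inner_add_right, inner_smul_right, h₁₂, inner_self_eq_norm_sq_to_K, he₁]

end InnerProductSpace

theorem one_le_norm_of_eq_sq_mul {𝕜 : Type*} [NormedDivisionRing 𝕜] {c z : 𝕜} (hc : c ≠ 0)
    (hcz : c = c ^ 2 * z) (hz : ‖z‖ ≤ 1) : 1 ≤ ‖c‖ := by
  have hone : c * z = 1 := mul_left_cancel₀ hc (by rw [mul_one, ← mul_assoc, ← sq, ← hcz])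
  calc 1 = ‖c‖ * ‖z‖ := by rw [← norm_mul, hone, norm_one]
    _ ≤ ‖c‖ := mul_le_of_le_one_right (norm_nonneg c) hz

theorem inner_eq_inner_sq_mul_of_clone {𝕜 H K : Type*} [RCLike 𝕜]
    [NormedAddCommGroup H] [InnerProductSpace 𝕜 H] [NormedAddCommGroup K] [InnerProductSpace 𝕜 K]
    {U : H ⊗[𝕜] (H ⊗[𝕜] K) → H ⊗[𝕜] (H ⊗[𝕜] K)} {ip : H ⊗[𝕜] (H ⊗[𝕜] K) → H ⊗[𝕜] (H ⊗[𝕜] K) → 𝕜}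
    (hip : ∀ (a b a' b' : H) (c c' : K), ip (a ⊗ₜ[𝕜] (b ⊗ₜ[𝕜] c)) (a' ⊗ₜ[𝕜] (b' ⊗ₜ[𝕜] c')) =
      inner 𝕜 a a' * inner 𝕜 b b' * inner 𝕜 c c')
    (hiso : ∀ s t, ip (U s) (U t) = ip s t)
    {β ψ φ : H} {ρ u v : K} (hβ : ‖β‖ = 1) (hρ : ‖ρ‖ = 1)
    (hψ : U (ψ ⊗ₜ[𝕜] (β ⊗ₜ[𝕜] ρ)) = ψ ⊗ₜ[𝕜] (ψ ⊗ₜ[𝕜] u))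
    (hφ : U (φ ⊗ₜ[𝕜] (β ⊗ₜ[𝕜] ρ)) = φ ⊗ₜ[𝕜] (φ ⊗ₜ[𝕜] v)) :
    inner 𝕜 ψ φ = inner 𝕜 ψ φ ^ 2 * inner 𝕜 u v := by
  have h := hiso (ψ ⊗ₜ[𝕜] (β ⊗ₜ[𝕜] ρ)) (φ ⊗ₜ[𝕜] (β ⊗ₜ[𝕜] ρ))
  rw [hψ, hφ, hip, hip, inner_self_eq_norm_sq_to_K, inner_self_eq_norm_sq_to_K, hβ, hρ] at h
  simpa [sq] using h.symm

/-- Expanded quantum no-cloning theorem: if `dim H > 1`, there is no unit vector `β ∈ H`,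
complex Hilbert space `K`, unit vector `ρ ∈ K`, function `f` from unit vectors of `H` to
unit vectors of `K`, and linear isometry `U : H ⊗ H ⊗ K → H ⊗ H ⊗ K` (isometry with
respect to the induced inner product `ip`, satisfying
`ip (a ⊗ b ⊗ c) (a' ⊗ b' ⊗ c') = ⟪a,a'⟫⟪b,b'⟫⟪c,c'⟫`) with
`U (ψ ⊗ β ⊗ ρ) = ψ ⊗ ψ ⊗ f ψ` for all unit vectors `ψ`. -/
theorem no_cloning_expanded_quantum
    {H : Type*} [NormedAddCommGroup H] [InnerProductSpace ℂ H]
    (hdim : 1 < Module.rank ℂ H) :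
    ¬ ∃ (K : Type) (_ : NormedAddCommGroup K) (_ : InnerProductSpace ℂ K),
      ∃ (β : H) (ρ : K) (f : H → K)
        (U : (H ⊗[ℂ] (H ⊗[ℂ] K)) →ₗ[ℂ] (H ⊗[ℂ] (H ⊗[ℂ] K)))
        (ip : (H ⊗[ℂ] (H ⊗[ℂ] K)) → (H ⊗[ℂ] (H ⊗[ℂ] K)) → ℂ),
        ‖β‖ = 1 ∧ ‖ρ‖ = 1 ∧
        (∀ ψ : H, ‖ψ‖ = 1 → ‖f ψ‖ = 1) ∧
        (∀ a b a' b' : H, ∀ c c' : K,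
          ip (a ⊗ₜ[ℂ] (b ⊗ₜ[ℂ] c)) (a' ⊗ₜ[ℂ] (b' ⊗ₜ[ℂ] c')) = ⟪a, a'⟫ * ⟪b, b'⟫ * ⟪c, c'⟫) ∧
        (∀ s t, ip (U s) (U t) = ip s t) ∧
        (∀ ψ : H, ‖ψ‖ = 1 → U (ψ ⊗ₜ[ℂ] (β ⊗ₜ[ℂ] ρ)) = ψ ⊗ₜ[ℂ] (ψ ⊗ₜ[ℂ] f ψ)) := by
  rintro ⟨K, _, _, β, ρ, f, U, ip, hβ, hρ, hf, hip, hiso, hU⟩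
  obtain ⟨ψ, φ, hψ, hφ, hψφ⟩ := exists_norm_eq_one_inner_eq_three_fifths (𝕜 := ℂ) hdim
  have hsq := inner_eq_inner_sq_mul_of_clone hip hiso hβ hρ (hU ψ hψ) (hU φ hφ)
  have hcs : ‖⟪f ψ, f φ⟫‖ ≤ 1 := by
    simpa [hf ψ hψ, hf φ hφ] using norm_inner_le_norm (𝕜 := ℂ) (f ψ) (f φ)
  have := one_le_norm_of_eq_sq_mul (by rw [hψφ]; norm_num) hsq hcs
  rw [hψφ] at this
  norm_num at this
end

section
/- Let H be a complex Hilbert space with dim H > 1. If ψ and ψ̃ are unit vectors with 0 < |⟨ψ, ψ̃⟩| < 1, and U : H ⊗ H ⊗ K → H ⊗ H ⊗ K is a linear isometry with U(ψ ⊗ β ⊗ ρ) = ψ ⊗ ψ ⊗ f(ψ) and U(ψ̃ ⊗ β ⊗ ρ) = ψ̃ ⊗ ψ̃ ⊗ f(ψ̃) for unit vectors β ∈ H, ρ ∈ K, f(ψ), f(ψ̃) ∈ K, then 1 = ⟨ψ, ψ̃⟩ ⟨f(ψ), f(ψ̃)⟩, which contradicts the Cauchy–Schwarz inequality; hence no such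 data exist. -/
/-!
Since `U` preserves `ip`, comparing the two input states with their clones gives
`⟪ψ, ψ'⟫ = ⟪ψ, ψ'⟫² ⟪fψ, fψ'⟫`; dividing by `⟪ψ, ψ'⟫ ≠ 0` gives
`⟪ψ, ψ'⟫ ⟪fψ, fψ'⟫ = 1`, which Cauchy–Schwarz forbids once `‖⟪ψ, ψ'⟫‖ < 1`.
-/

open scoped TensorProduct

local notation "⟪" x ", " y "⟫" => @inner ℂ _ _ x y

theorem one_le_norm_of_mul_eq_one_of_norm_le_one {𝕜 : Type*} [NormedDivisionRing 𝕜] {z w : 𝕜}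
    (hzw : z * w = 1) (hw : ‖w‖ ≤ 1) : 1 ≤ ‖z‖ := by
  have hnorm : ‖z‖ * ‖w‖ = 1 := by rw [← norm_mul, hzw, norm_one]
  nlinarith [norm_nonneg z]

theorem norm_inner_le_one_of_norm_eq_one {𝕜 E : Type*} [RCLike 𝕜] [NormedAddCommGroup E]
    [InnerProductSpace 𝕜 E] {x y : E} (hx : ‖x‖ = 1) (hy : ‖y‖ = 1) : ‖inner 𝕜 x y‖ ≤ 1 :=
  (norm_inner_le_norm x y).trans_eq (by rw [hx, hy, one_mul])

theorem inner_mul_inner_eq_one_of_clones {𝕜 H K : Type*} [RCLike 𝕜]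
    [NormedAddCommGroup H] [InnerProductSpace 𝕜 H] [NormedAddCommGroup K] [InnerProductSpace 𝕜 K]
    {ψ ψ' β : H} {ρ fψ fψ' : K} (hβ : ‖β‖ = 1) (hρ : ‖ρ‖ = 1) (hψψ' : inner 𝕜 ψ ψ' ≠ 0)
    {U : H ⊗[𝕜] (H ⊗[𝕜] K) → H ⊗[𝕜] (H ⊗[𝕜] K)} {ip : H ⊗[𝕜] (H ⊗[𝕜] K) → H ⊗[𝕜] (H ⊗[𝕜] K) → 𝕜}
    (hip : ∀ a b a' b' : H, ∀ c c' : K,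
      ip (a ⊗ₜ (b ⊗ₜ c)) (a' ⊗ₜ (b' ⊗ₜ c')) = inner 𝕜 a a' * inner 𝕜 b b' * inner 𝕜 c c')
    (hU : ∀ s t, ip (U s) (U t) = ip s t)
    (hclone : U (ψ ⊗ₜ (β ⊗ₜ ρ)) = ψ ⊗ₜ (ψ ⊗ₜ fψ))
    (hclone' : U (ψ' ⊗ₜ (β ⊗ₜ ρ)) = ψ' ⊗ₜ (ψ' ⊗ₜ fψ')) :
    inner 𝕜 ψ ψ' * inner 𝕜 fψ fψ' = 1 := by
  have hpreserved := hU (ψ ⊗ₜ (β ⊗ₜ ρ)) (ψ' ⊗ₜ (β ⊗ₜ ρ))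
  rw [hclone, hclone', hip, hip, inner_self_eq_norm_sq_to_K, inner_self_eq_norm_sq_to_K, hβ, hρ,
    RCLike.ofReal_one] at hpreserved
  apply mul_left_cancel₀ hψψ'
  linear_combination hpreserved

theorem no_cloning_two_states_general
    {H : Type*} [NormedAddCommGroup H] [InnerProductSpace ℂ H]
    {K : Type*} [NormedAddCommGroup K] [InnerProductSpace ℂ K]
    (ψ ψ' β : H) (ρ fψ fψ' : K)
    (hβ : ‖β‖ = 1) (hρ : ‖ρ‖ = 1)
    (hfψ : ‖fψ‖ = 1) (hfψ' : ‖fψ'‖ = 1)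
    (hlow : 0 < ‖⟪ψ, ψ'⟫‖) (hhigh : ‖⟪ψ, ψ'⟫‖ < 1)
    (U : (H ⊗[ℂ] (H ⊗[ℂ] K)) →ₗ[ℂ] (H ⊗[ℂ] (H ⊗[ℂ] K)))
    (ip : (H ⊗[ℂ] (H ⊗[ℂ] K)) → (H ⊗[ℂ] (H ⊗[ℂ] K)) → ℂ)
    (hip : ∀ a b a' b' : H, ∀ c c' : K,
      ip (a ⊗ₜ[ℂ] (b ⊗ₜ[ℂ] c)) (a' ⊗ₜ[ℂ] (b' ⊗ₜ[ℂ] c')) = ⟪a, a'⟫ * ⟪b, b'⟫ * ⟪c, c'⟫)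
    (hU : ∀ s t, ip (U s) (U t) = ip s t)
    (hclone : U (ψ ⊗ₜ[ℂ] (β ⊗ₜ[ℂ] ρ)) = ψ ⊗ₜ[ℂ] (ψ ⊗ₜ[ℂ] fψ))
    (hclone' : U (ψ' ⊗ₜ[ℂ] (β ⊗ₜ[ℂ] ρ)) = ψ' ⊗ₜ[ℂ] (ψ' ⊗ₜ[ℂ] fψ')) :
    False := by
  have hone := inner_mul_inner_eq_one_of_clones hβ hρ (norm_pos_iff.mp hlow) hip hU hclone hclone'
  have := one_le_norm_of_mul_eq_one_of_norm_le_one hone (norm_inner_le_one_of_norm_eq_one hfψ hfψ')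
  linarith

/-- Given unit vectors `ψ, ψ̃` with `0 < |⟪ψ,ψ̃⟫| < 1` and a linear isometry
`U : H ⊗ H ⊗ K → H ⊗ H ⊗ K` cloning both `ψ` and `ψ̃` (with ancilla states `fψ, fψ'`),
a contradiction follows (via `1 = ⟪ψ,ψ̃⟫⟪fψ,fψ'⟫` and Cauchy–Schwarz): no such data exist. -/
theorem no_cloning_two_states
    {H : Type*} [NormedAddCommGroup H] [InnerProductSpace ℂ H]
    {K : Type*} [NormedAddCommGroup K] [InnerProductSpace ℂ K]
    (ψ ψ' β : H) (ρ fψ fψ' : K)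
    (hψ : ‖ψ‖ = 1) (hψ' : ‖ψ'‖ = 1) (hβ : ‖β‖ = 1) (hρ : ‖ρ‖ = 1)
    (hfψ : ‖fψ‖ = 1) (hfψ' : ‖fψ'‖ = 1)
    (hlow : 0 < ‖⟪ψ, ψ'⟫‖) (hhigh : ‖⟪ψ, ψ'⟫‖ < 1)
    (U : (H ⊗[ℂ] (H ⊗[ℂ] K)) →ₗ[ℂ] (H ⊗[ℂ] (H ⊗[ℂ] K)))
    (ip : (H ⊗[ℂ] (H ⊗[ℂ] K)) → (H ⊗[ℂ] (H ⊗[ℂ] K)) → ℂ)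
    (hip : ∀ a b a' b' : H, ∀ c c' : K,
      ip (a ⊗ₜ[ℂ] (b ⊗ₜ[ℂ] c)) (a' ⊗ₜ[ℂ] (b' ⊗ₜ[ℂ] c')) = ⟪a, a'⟫ * ⟪b, b'⟫ * ⟪c, c'⟫)
    (hU : ∀ s t, ip (U s) (U t) = ip s t)
    (hclone : U (ψ ⊗ₜ[ℂ] (β ⊗ₜ[ℂ] ρ)) = ψ ⊗ₜ[ℂ] (ψ ⊗ₜ[ℂ] fψ))
    (hclone' : U (ψ' ⊗ₜ[ℂ] (β ⊗ₜ[ℂ] ρ)) = ψ' ⊗ₜ[ℂ] (ψ' ⊗ₜ[ℂ] fψ')) :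
    False :=
  no_cloning_two_states_general ψ ψ' β ρ fψ fψ' hβ hρ hfψ hfψ' hlow hhigh U ip hip hU hclone hclone'
end

section
/- Let (V, ω) be a symplectic vector space with dim V > 0. There is no point b ∈ V and linear symplectic map φ : V × V → V × V (with the direct-sum symplectic form ω ⊕ ω) such that φ(x, b) = (x, x) for all x ∈ V. -/
/-!
Subtracting the cloning identity at `0` from the one at `x` removes `b` and `c`, so the linear
part sends `(x, 0)` to `(x, x)`. Pulling `ω ⊕ ω` back along `x ↦ (x, x)` gives `2ω`, while on
`V × 0` it is `ω`; hence `ω = 0`, which a nondegenerate form allows only on the zero space.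
-/

theorem LinearMap.apply_mk_zero_eq_sub_of_apply_mk_add {R M P N : Type*} [Ring R]
    [AddCommGroup M] [AddCommGroup P] [AddCommGroup N] [Module R M] [Module R P] [Module R N]
    {L : M × P →ₗ[R] N} {b : P} {c : N} {g : M → N} (h : ∀ x, L (x, b) + c = g x) (x : M) :
    L (x, 0) = g x - g 0 :=
  calc L (x, 0) = L (x, b) - L (0, b) := by rw [← map_sub, Prod.mk_sub_mk, sub_zero, sub_self]
    _ = g x - g 0 := by rw [eq_sub_of_add_eq (h x), eq_sub_of_add_eq (h 0), sub_sub_sub_cancel_right]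

theorem no_cloning_traditional_classical_general
    {V : Type*} [AddCommGroup V] [Module ℝ V]
    (ω : V →ₗ[ℝ] V →ₗ[ℝ] ℝ)
    (hnd : ∀ v : V, (∀ w : V, ω v w = 0) → v = 0)
    (hdim : 0 < Module.finrank ℝ V) :
    ¬ ∃ (b : V) (L : (V × V) →ₗ[ℝ] (V × V)) (c : V × V),
      (∀ u w : V × V,
        ω (L u).1 (L w).1 + ω (L u).2 (L w).2 = ω u.1 w.1 + ω u.2 w.2) ∧
      (∀ x : V, L (x, b) + c = (x, x)) := by
  rintro ⟨b, L, c, hsymp, hclone⟩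
  have hdiag (v : V) : L (v, 0) = (v, v) := by
    simpa using L.apply_mk_zero_eq_sub_of_apply_mk_add hclone v
  have hω (v w : V) : ω v w = 0 := by
    simpa [hdiag] using hsymp (v, 0) (w, 0)
  have : Subsingleton V := ⟨fun v w => (hnd v (hω v)).trans (hnd w (hω w)).symm⟩
  exact hdim.ne' Module.finrank_zero_of_subsingleton

/-- Traditional classical no-cloning theorem (linear/affine version): for a symplectic
vector space `(V, ω)` with `dim V > 0`, there is no point `b ∈ V` and affine symplectic
map `φ(u) = L u + c` (with `L` linear preserving the direct-sum form `ω ⊕ ω`) such that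
`φ (x, b) = (x, x)` for all `x ∈ V`. -/
theorem no_cloning_traditional_classical
    {V : Type*} [AddCommGroup V] [Module ℝ V] [FiniteDimensional ℝ V]
    (ω : V →ₗ[ℝ] V →ₗ[ℝ] ℝ)
    (halt : ∀ v : V, ω v v = 0)
    (hnd : ∀ v : V, (∀ w : V, ω v w = 0) → v = 0)
    (hdim : 0 < Module.finrank ℝ V) :
    ¬ ∃ (b : V) (L : (V × V) →ₗ[ℝ] (V × V)) (c : V × V),
      (∀ u w : V × V,
        ω (L u).1 (L w).1 + ω (L u).2 (L w).2 = ω u.1 w.1 + ω u.2 w.2) ∧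
      (∀ x : V, L (x, b) + c = (x, x)) :=
  no_cloning_traditional_classical_general ω hnd hdim
end

section
/- Let M, N be symplectic manifolds with symplectic forms ω, σ, let b ∈ M, r ∈ N, let f : M → N be a function, and let φ : M × M × N → M × M × N be a symplectic map (with respect to the product symplectic structure) such that φ(x, b, r) = (x, x, f(x)) for all x ∈ M. Then dim N ≥ dim M. -/
/-! The derivative of the cloning map at the blank state `(b, b, r)`, restricted to the first
factor, is `v ↦ (v, v, F v)` with `F = D f(b)`. Pulling back the product form along it gives
`2 ω + σ ∘ (F × F)`, which must equal `ω`; hence `ω = -σ ∘ (F × F)` at `b`, and nondegeneracy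
of `ω` forces `F` to be injective. -/

open Function

theorem LinearMap.injective_of_separatingLeft_compl₁₂
    {R V V' W W' : Type*} [CommRing R] [AddCommGroup V] [Module R V] [AddCommGroup V']
    [Module R V'] [AddCommGroup W] [Module R W] [AddCommGroup W'] [Module R W']
    {C : W →ₗ[R] W' →ₗ[R] R} {F : V →ₗ[R] W} {G : V' →ₗ[R] W'}
    (h : (C.compl₁₂ F G).SeparatingLeft) : Injective F := by
  refine (injective_iff_map_eq_zero F).2 fun v hv => h v fun w => ?_
  simp [hv]

section Derivative

variable {𝕜 E F G : Type*} [NontriviallyNormedField 𝕜]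
  [NormedAddCommGroup E] [NormedSpace 𝕜 E] [NormedAddCommGroup F] [NormedSpace 𝕜 F]
  [NormedAddCommGroup G] [NormedSpace 𝕜 G]

theorem fderiv_apply_inl_of_hasFDerivAt_slice {φ : E × F → G} {x : E} {y : F} {g' : E →L[𝕜] G}
    (hφ : DifferentiableAt 𝕜 φ (x, y)) (hg : HasFDerivAt (fun e => φ (e, y)) g' x) (v : E) :
    fderiv 𝕜 φ (x, y) (v, 0) = g' v := by
  have hslice := hφ.hasFDerivAt.comp x (hasFDerivAt_prodMk_left (𝕜 := 𝕜) x y)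
  rw [← hslice.unique hg]
  rfl

variable {φ : E × E × F → E × E × F} {b : E} {r : F} {f : E → F}

theorem differentiableAt_of_clone (hφ : DifferentiableAt 𝕜 φ (b, b, r))
    (hclone : ∀ x, φ (x, b, r) = (x, x, f x)) : DifferentiableAt 𝕜 f b := by
  have hf : f = fun x => (φ (x, b, r)).2.2 := funext fun x => by rw [hclone]
  rw [hf]
  exact (hφ.comp b (differentiableAt_id.prodMk (differentiableAt_const (b, r)))).snd.snd

theorem fderiv_clone_apply (hφ : DifferentiableAt 𝕜 φ (b, b, r))
    (hclone : ∀ x, φ (x, b, r) = (x, x, f x)) (v : E) :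
    fderiv 𝕜 φ (b, b, r) (v, 0, 0) = (v, v, fderiv 𝕜 f b v) := by
  have hslice : HasFDerivAt (fun x => φ (x, b, r))
      ((ContinuousLinearMap.id 𝕜 E).prod ((ContinuousLinearMap.id 𝕜 E).prod (fderiv 𝕜 f b))) b := by
    simp only [hclone]
    exact (hasFDerivAt_id b).prodMk
      ((hasFDerivAt_id b).prodMk (differentiableAt_of_clone hφ hclone).hasFDerivAt)
  exact fderiv_apply_inl_of_hasFDerivAt_slice (y := (b, r)) hφ hslice v

end Derivative

theorem cloning_machine_dim_ge_general
    {M : Type*} [NormedAddCommGroup M] [NormedSpace ℝ M]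
    {N : Type*} [NormedAddCommGroup N] [NormedSpace ℝ N] [FiniteDimensional ℝ N]
    (ω : M → M →ₗ[ℝ] M →ₗ[ℝ] ℝ)
    (hωnd : ∀ x : M, ∀ v : M, (∀ w : M, ω x v w = 0) → v = 0)
    (σ : N → N →ₗ[ℝ] N →ₗ[ℝ] ℝ)
    (b : M) (r : N) (f : M → N)
    (φ : M × M × N → M × M × N)
    (hdiff : Differentiable ℝ φ)
    (hsymp : ∀ p u v : M × M × N,
      ω (φ p).1 (fderiv ℝ φ p u).1 (fderiv ℝ φ p v).1 +
        ω (φ p).2.1 (fderiv ℝ φ p u).2.1 (fderiv ℝ φ p v).2.1 +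
        σ (φ p).2.2 (fderiv ℝ φ p u).2.2 (fderiv ℝ φ p v).2.2
      = ω p.1 u.1 v.1 + ω p.2.1 u.2.1 v.2.1 + σ p.2.2 u.2.2 v.2.2)
    (hclone : ∀ x : M, φ (x, b, r) = (x, x, f x)) :
    Module.finrank ℝ M ≤ Module.finrank ℝ N := by
  have hpullback : ω b = (-σ (f b)).compl₁₂ (fderiv ℝ f b : M →ₗ[ℝ] N) (fderiv ℝ f b) := by
    ext v w
    have h := hsymp (b, b, r) (v, 0, 0) (w, 0, 0)
    rw [fderiv_clone_apply (hdiff _) hclone, fderiv_clone_apply (hdiff _) hclone, hclone] at h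
    simp only [map_zero, add_zero] at h
    simp only [LinearMap.compl₁₂_apply, LinearMap.neg_apply, ContinuousLinearMap.coe_coe]
    linarith
  have hsep : (ω b).SeparatingLeft := hωnd b
  rw [hpullback] at hsep
  exact LinearMap.finrank_le_finrank_of_injective
    (LinearMap.injective_of_separatingLeft_compl₁₂ hsep)

/-- Minimum size of a classical cloning machine. `M` and `N` carry (possibly varying)
symplectic structures `ω`, `σ` (each `ω x` a nondegenerate alternating bilinear form on
the tangent space, here identified with the model vector space). If
`φ : M × M × N → M × M × N` is a differentiable symplectic map for the product
symplectic structure and `φ (x, b, r) = (x, x, f x)` for all `x`, then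
`dim N ≥ dim M`. -/
theorem cloning_machine_dim_ge
    {M : Type*} [NormedAddCommGroup M] [NormedSpace ℝ M] [FiniteDimensional ℝ M]
    {N : Type*} [NormedAddCommGroup N] [NormedSpace ℝ N] [FiniteDimensional ℝ N]
    (ω : M → M →ₗ[ℝ] M →ₗ[ℝ] ℝ)
    (hωalt : ∀ x : M, ∀ v : M, ω x v v = 0)
    (hωnd : ∀ x : M, ∀ v : M, (∀ w : M, ω x v w = 0) → v = 0)
    (σ : N → N →ₗ[ℝ] N →ₗ[ℝ] ℝ)
    (hσalt : ∀ y : N, ∀ v : N, σ y v v = 0)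
    (hσnd : ∀ y : N, ∀ v : N, (∀ w : N, σ y v w = 0) → v = 0)
    (b : M) (r : N) (f : M → N)
    (φ : M × M × N → M × M × N)
    (hdiff : Differentiable ℝ φ)
    (hsymp : ∀ p u v : M × M × N,
      ω (φ p).1 (fderiv ℝ φ p u).1 (fderiv ℝ φ p v).1 +
        ω (φ p).2.1 (fderiv ℝ φ p u).2.1 (fderiv ℝ φ p v).2.1 +
        σ (φ p).2.2 (fderiv ℝ φ p u).2.2 (fderiv ℝ φ p v).2.2
      = ω p.1 u.1 v.1 + ω p.2.1 u.2.1 v.2.1 + σ p.2.2 u.2.2 v.2.2)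
    (hclone : ∀ x : M, φ (x, b, r) = (x, x, f x)) :
    Module.finrank ℝ M ≤ Module.finrank ℝ N :=
  cloning_machine_dim_ge_general ω hωnd σ b r f φ hdiff hsymp hclone
end

section
/- Let (V, ω), (W, σ) be symplectic vector spaces, f : V → W a differentiable map, and φ : V × V × W → V × V × W a (not necessarily linear) differentiable symplectic map for the direct-sum symplectic form, with φ(x, b, r) = (x, x, f(x)) for all x ∈ V, for some fixed b ∈ V, r ∈ W. Then for every x ∈ V and v, ṽ ∈ V, -ω(v, ṽ) = σ(df_x v, df_x ṽ), and consequently dim W ≥ dim V. -/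
/-!
Restricting `φ` to the slice `V × {b} × {r}` and differentiating the cloning identity shows
that `dφ_(x,b,r)` sends `(v, 0, 0)` to `(v, v, df_x v)`. Since `dφ` preserves `ω ⊕ ω ⊕ σ`,
comparing the forms on two such vectors gives `2 ω(v, ṽ) + σ(df_x v, df_x ṽ) = ω(v, ṽ)`.
Hence `df_x` pulls `σ` back to `-ω`, which is nondegenerate, so `df_x` is injective and
`dim V ≤ dim W`.
-/

open ContinuousLinearMap

namespace LinearMap

variable {R M N P : Type*} [CommRing R] [AddCommGroup M] [Module R M] [AddCommGroup N]
  [Module R N] [AddCommGroup P] [Module R P]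

theorem SeparatingLeft.neg {B : M →ₗ[R] N →ₗ[R] P} (hB : B.SeparatingLeft) :
    (-B).SeparatingLeft :=
  fun x hx ↦ hB x fun y ↦ by simpa using hx y

theorem injective_of_separatingLeft_compl₁₂_s7 {σ : N →ₗ[R] N →ₗ[R] P} {L : M →ₗ[R] N}
    (h : (σ.compl₁₂ L L).SeparatingLeft) : Function.Injective L := by
  rw [injective_iff_map_eq_zero]
  exact fun v hv ↦ h v fun w ↦ by simp [hv]

end LinearMap

theorem fderiv_apply_inl_of_apply_eq_diag {𝕜 E F : Type*} [NontriviallyNormedField 𝕜]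
    [NormedAddCommGroup E] [NormedSpace 𝕜 E] [NormedAddCommGroup F] [NormedSpace 𝕜 F]
    {φ : E × E × F → E × E × F} {f : E → F} {c : E × F} {x : E}
    (hφ : DifferentiableAt 𝕜 φ (x, c)) (hclone : ∀ y, φ (y, c) = (y, y, f y)) (v : E) :
    fderiv 𝕜 φ (x, c) (inl 𝕜 E (E × F) v) = (v, v, fderiv 𝕜 f x v) := by
  have hslice : HasFDerivAt (fun y ↦ (y, y, f y))
      ((fderiv 𝕜 φ (x, c)).comp (inl 𝕜 E (E × F))) x := by
    simpa only [Function.comp_def, hclone] using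
      hφ.hasFDerivAt.comp x (hasFDerivAt_prodMk_left (𝕜 := 𝕜) x c)
  have hf : DifferentiableAt 𝕜 f x := hslice.differentiableAt.snd.snd
  have hderiv := hslice.unique
    ((hasFDerivAt_id x).prodMk ((hasFDerivAt_id x).prodMk hf.hasFDerivAt))
  simpa using congr($hderiv v)

theorem cloning_machine_dim_ge_vector_space_general
    {V : Type*} [NormedAddCommGroup V] [NormedSpace ℝ V]
    {W : Type*} [NormedAddCommGroup W] [NormedSpace ℝ W] [FiniteDimensional ℝ W]
    (ω : V →ₗ[ℝ] V →ₗ[ℝ] ℝ)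
    (hωnd : ∀ v : V, (∀ w : V, ω v w = 0) → v = 0)
    (σ : W →ₗ[ℝ] W →ₗ[ℝ] ℝ)
    (b : V) (r : W) (f : V → W)
    (φ : V × V × W → V × V × W)
    (hdiff : Differentiable ℝ φ)
    (hsymp : ∀ p u v : V × V × W,
      ω (fderiv ℝ φ p u).1 (fderiv ℝ φ p v).1 +
        ω (fderiv ℝ φ p u).2.1 (fderiv ℝ φ p v).2.1 +
        σ (fderiv ℝ φ p u).2.2 (fderiv ℝ φ p v).2.2
      = ω u.1 v.1 + ω u.2.1 v.2.1 + σ u.2.2 v.2.2)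
    (hclone : ∀ x : V, φ (x, b, r) = (x, x, f x)) :
    (∀ (x v v' : V), -(ω v v') = σ (fderiv ℝ f x v) (fderiv ℝ f x v')) ∧
      Module.finrank ℝ V ≤ Module.finrank ℝ W := by
  have hpullback (x v v' : V) : -(ω v v') = σ (fderiv ℝ f x v) (fderiv ℝ f x v') := by
    have h := hsymp (x, b, r) (inl ℝ V (V × W) v) (inl ℝ V (V × W) v')
    rw [fderiv_apply_inl_of_apply_eq_diag (hdiff _) hclone,
      fderiv_apply_inl_of_apply_eq_diag (hdiff _) hclone] at h
    simp only [inl_apply, Prod.fst_zero, Prod.snd_zero, map_zero] at h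
    linarith
  refine ⟨hpullback, ?_⟩
  have hcompl : σ.compl₁₂ (fderiv ℝ f 0 : V →ₗ[ℝ] W) (fderiv ℝ f 0) = -ω := by
    ext v v'
    simp [← hpullback 0 v v']
  exact LinearMap.finrank_le_finrank_of_injective
    (LinearMap.injective_of_separatingLeft_compl₁₂_s7 (hcompl ▸ LinearMap.SeparatingLeft.neg hωnd))

/-- Linear-space version of the cloning machine size bound: if `(V, ω)`, `(W, σ)` are
symplectic vector spaces, `φ : V × V × W → V × V × W` is a differentiable symplectic map
for the direct-sum form `ω ⊕ ω ⊕ σ`, and `φ (x, b, r) = (x, x, f x)` for all `x`, then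
`-ω v ṽ = σ (df_x v) (df_x ṽ)` for all `x, v, ṽ`, and consequently `dim W ≥ dim V`. -/
theorem cloning_machine_dim_ge_vector_space
    {V : Type*} [NormedAddCommGroup V] [NormedSpace ℝ V] [FiniteDimensional ℝ V]
    {W : Type*} [NormedAddCommGroup W] [NormedSpace ℝ W] [FiniteDimensional ℝ W]
    (ω : V →ₗ[ℝ] V →ₗ[ℝ] ℝ)
    (hωalt : ∀ v : V, ω v v = 0)
    (hωnd : ∀ v : V, (∀ w : V, ω v w = 0) → v = 0)
    (σ : W →ₗ[ℝ] W →ₗ[ℝ] ℝ)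
    (hσalt : ∀ w : W, σ w w = 0)
    (hσnd : ∀ w : W, (∀ w' : W, σ w w' = 0) → w = 0)
    (b : V) (r : W) (f : V → W)
    (φ : V × V × W → V × V × W)
    (hdiff : Differentiable ℝ φ)
    (hsymp : ∀ p u v : V × V × W,
      ω (fderiv ℝ φ p u).1 (fderiv ℝ φ p v).1 +
        ω (fderiv ℝ φ p u).2.1 (fderiv ℝ φ p v).2.1 +
        σ (fderiv ℝ φ p u).2.2 (fderiv ℝ φ p v).2.2
      = ω u.1 v.1 + ω u.2.1 v.2.1 + σ u.2.2 v.2.2)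
    (hclone : ∀ x : V, φ (x, b, r) = (x, x, f x)) :
    (∀ (x v v' : V), -(ω v v') = σ (fderiv ℝ f x v) (fderiv ℝ f x v')) ∧
      Module.finrank ℝ V ≤ Module.finrank ℝ W :=
  cloning_machine_dim_ge_vector_space_general ω hωnd σ b r f φ hdiff hsymp hclone
end

section
/- With φ as the 6×6 linear map of the preceding block matrix on (ℝ²)³, for all x ∈ ℝ² one has φ(x, 0, 0) = (x, x, Fx), where F = diag(1, −1). Hence φ, together with b = 0, r = 0, and f(x) = Fx, is a classical cloning process for the symplectic vector space (ℝ², ω_std). -/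
open Matrix

/-- The block matrix of the paper's Example 1. -/
def cloningMatrix : Matrix (Fin 6) (Fin 6) ℝ :=
  !![1, 0,  1,  0, 0,  0;
     0, 1,  0,  0, 0, -1;
     1, 0, -1,  0, 1,  0;
     0, 1,  0, -1, 0, -1;
     1, 0,  0,  0, 1,  0;
     0, -1, 0,  1, 0,  2]

/-- The matrix of the direct-sum symplectic form `ω ⊕ ω ⊕ ω` on `(ℝ²)³`. -/
def Xi : Matrix (Fin 6) (Fin 6) ℝ :=
  !![0, 1, 0, 0, 0, 0;
     -1, 0, 0, 0, 0, 0;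
     0, 0, 0, 1, 0, 0;
     0, 0, -1, 0, 0, 0;
     0, 0, 0, 0, 0, 1;
     0, 0, 0, 0, -1, 0]

theorem Matrix.mulVec_dotProduct_mulVec_mulVec_of_transpose_mul_mul {m R : Type*} [Fintype m]
    [CommSemiring R] {A J : Matrix m m R} (h : Aᵀ * J * A = J) (u w : m → R) :
    (A *ᵥ u) ⬝ᵥ J *ᵥ (A *ᵥ w) = u ⬝ᵥ J *ᵥ w := by
  rw [mulVec_mulVec, dotProduct_mulVec, vecMul_mulVec, ← dotProduct_mulVec, ← Matrix.mul_assoc,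
    h]

theorem cloningMatrix_transpose_mul_Xi_mul : cloningMatrixᵀ * Xi * cloningMatrix = Xi := by
  ext i j
  fin_cases i <;> fin_cases j <;> norm_num [cloningMatrix, Xi, Matrix.mul_apply, Fin.sum_univ_succ]

theorem cloningMatrix_mulVec_blank (a b : ℝ) :
    cloningMatrix *ᵥ ![a, b, 0, 0, 0, 0] = ![a, b, a, b, a, -b] := by
  ext i
  fin_cases i <;> simp [cloningMatrix, mulVec, dotProduct, Fin.sum_univ_succ]

/-- For all `x ∈ ℝ²`, `φ (x, 0, 0) = (x, x, F x)` where `F = diag(1, −1)`; together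
with the fact that `φ` preserves `ω ⊕ ω ⊕ ω`, this makes `φ` (with `b = 0`, `r = 0`,
`f x = F x`) a classical cloning process for `(ℝ², ω_std)`. -/
theorem cloningMatrix_is_cloning_process :
    (∀ x : Fin 2 → ℝ,
      cloningMatrix.mulVec ![x 0, x 1, 0, 0, 0, 0]
        = ![x 0, x 1, x 0, x 1, x 0, -x 1]) ∧
    (∀ u w : Fin 6 → ℝ,
      (cloningMatrix.mulVec u) ⬝ᵥ Xi.mulVec (cloningMatrix.mulVec w)
        = u ⬝ᵥ Xi.mulVec w) :=
  ⟨fun x => cloningMatrix_mulVec_blank (x 0) (x 1),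
    mulVec_dotProduct_mulVec_mulVec_of_transpose_mul_mul cloningMatrix_transpose_mul_Xi_mul⟩
end

section
/- Let (V, ω) be a symplectic vector space and L : V ⊕ V ⊕ V → V ⊕ V ⊕ V a linear map that is symplectic for ω ⊕ ω ⊕ ω and satisfies L(x, 0, 0) = (x, x, Fx) for some linear map F : V → V and all x ∈ V. Then F is a linear isomorphism satisfying ω(Fv, Fw) = −ω(v, w) for all v, w ∈ V. -/
/-! Evaluating the symplectic condition on `(v, 0, 0)` and `(w, 0, 0)` gives
`2 ω v w + ω (F v) (F w) = ω v w`: the two clones of the input over-count `ω` once, and the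
ancilla has to pay it back with the opposite sign. Nondegeneracy then makes `F` injective,
hence bijective in finite dimension. -/

section

variable {R M : Type*} [CommRing R] [AddCommGroup M] [Module R M]

theorem apply_apply_eq_neg_of_clones_preserving_sum (ω : M →ₗ[R] M →ₗ[R] R)
    (L : M × M × M → M × M × M)
    (hL : ∀ u w : M × M × M,
      ω (L u).1 (L w).1 + ω (L u).2.1 (L w).2.1 + ω (L u).2.2 (L w).2.2
        = ω u.1 w.1 + ω u.2.1 w.2.1 + ω u.2.2 w.2.2)
    (F : M → M) (hF : ∀ x : M, L (x, 0, 0) = (x, x, F x)) (v w : M) :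
    ω (F v) (F w) = -ω v w := by
  have h := hL (v, 0, 0) (w, 0, 0)
  simp only [hF, map_zero, add_zero] at h
  linear_combination h

theorem LinearMap.injective_of_apply_apply_eq_neg {ω : M →ₗ[R] M →ₗ[R] R}
    (hω : ω.SeparatingLeft) {F : M →ₗ[R] M} (hF : ∀ v w : M, ω (F v) (F w) = -ω v w) :
    Function.Injective F := by
  refine (injective_iff_map_eq_zero F).mpr fun v hv => hω v fun w => ?_
  simpa [hv] using hF v w

end

theorem cloning_ancilla_map_anti_symplectic_general
    {V : Type*} [AddCommGroup V] [Module ℝ V] [FiniteDimensional ℝ V]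
    (ω : V →ₗ[ℝ] V →ₗ[ℝ] ℝ)
    (hnd : ∀ v : V, (∀ w : V, ω v w = 0) → v = 0)
    (L : (V × V × V) →ₗ[ℝ] (V × V × V))
    (hL : ∀ u w : V × V × V,
      ω (L u).1 (L w).1 + ω (L u).2.1 (L w).2.1 + ω (L u).2.2 (L w).2.2
        = ω u.1 w.1 + ω u.2.1 w.2.1 + ω u.2.2 w.2.2)
    (F : V →ₗ[ℝ] V)
    (hF : ∀ x : V, L (x, 0, 0) = (x, x, F x)) :
    Function.Bijective F ∧ ∀ v w : V, ω (F v) (F w) = -ω v w := by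
  have hanti := apply_apply_eq_neg_of_clones_preserving_sum ω L hL F hF
  have hinj := LinearMap.injective_of_apply_apply_eq_neg hnd hanti
  exact ⟨⟨hinj, LinearMap.injective_iff_surjective.mp hinj⟩, hanti⟩

/-- If `(V, ω)` is a symplectic vector space and `L : V ⊕ V ⊕ V → V ⊕ V ⊕ V` is a
linear map preserving `ω ⊕ ω ⊕ ω` with `L (x, 0, 0) = (x, x, F x)` for a linear
`F : V → V`, then `F` is a linear isomorphism and `ω (F v) (F w) = -ω v w`. -/
theorem cloning_ancilla_map_anti_symplectic
    {V : Type*} [AddCommGroup V] [Module ℝ V] [FiniteDimensional ℝ V]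
    (ω : V →ₗ[ℝ] V →ₗ[ℝ] ℝ)
    (halt : ∀ v : V, ω v v = 0)
    (hnd : ∀ v : V, (∀ w : V, ω v w = 0) → v = 0)
    (L : (V × V × V) →ₗ[ℝ] (V × V × V))
    (hL : ∀ u w : V × V × V,
      ω (L u).1 (L w).1 + ω (L u).2.1 (L w).2.1 + ω (L u).2.2 (L w).2.2
        = ω u.1 w.1 + ω u.2.1 w.2.1 + ω u.2.2 w.2.2)
    (F : V →ₗ[ℝ] V)
    (hF : ∀ x : V, L (x, 0, 0) = (x, x, F x)) :
    Function.Bijective F ∧ ∀ v w : V, ω (F v) (F w) = -ω v w :=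
  cloning_ancilla_map_anti_symplectic_general ω hnd L hL F hF
end

section
/- Let H and K be complex inner product spaces and U : H ⊗ H ⊗ K → H ⊗ H ⊗ K a linear isometry. For all unit vectors ψ, ψ̃, β ∈ H and ρ, k, k̃ ∈ K with U(ψ⊗β⊗ρ) = ψ⊗ψ⊗k and U(ψ̃⊗β⊗ρ) = ψ̃⊗ψ̃⊗k̃, one has ⟨ψ, ψ̃⟩ = ⟨ψ, ψ̃⟩² ⟨k, k̃⟩. -/
open scoped TensorProduct

local notation "⟪" x ", " y "⟫" => @inner ℂ _ _ x y

theorem cloning_inner_product_identity_general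
    {H : Type*} [NormedAddCommGroup H] [InnerProductSpace ℂ H]
    {K : Type*} [NormedAddCommGroup K] [InnerProductSpace ℂ K]
    (U : (H ⊗[ℂ] (H ⊗[ℂ] K)) →ₗ[ℂ] (H ⊗[ℂ] (H ⊗[ℂ] K)))
    (ip : (H ⊗[ℂ] (H ⊗[ℂ] K)) → (H ⊗[ℂ] (H ⊗[ℂ] K)) → ℂ)
    (hip : ∀ a b a' b' : H, ∀ c c' : K,
      ip (a ⊗ₜ[ℂ] (b ⊗ₜ[ℂ] c)) (a' ⊗ₜ[ℂ] (b' ⊗ₜ[ℂ] c')) = ⟪a, a'⟫ * ⟪b, b'⟫ * ⟪c, c'⟫)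
    (hU : ∀ s t, ip (U s) (U t) = ip s t)
    (ψ ψ' β : H) (ρ k k' : K)
    (hβ : ‖β‖ = 1) (hρ : ‖ρ‖ = 1)
    (hc : U (ψ ⊗ₜ[ℂ] (β ⊗ₜ[ℂ] ρ)) = ψ ⊗ₜ[ℂ] (ψ ⊗ₜ[ℂ] k))
    (hc' : U (ψ' ⊗ₜ[ℂ] (β ⊗ₜ[ℂ] ρ)) = ψ' ⊗ₜ[ℂ] (ψ' ⊗ₜ[ℂ] k')) :
    ⟪ψ, ψ'⟫ = ⟪ψ, ψ'⟫ ^ 2 * ⟪k, k'⟫ := by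
  calc ⟪ψ, ψ'⟫ = ⟪ψ, ψ'⟫ * ⟪β, β⟫ * ⟪ρ, ρ⟫ := by
        rw [inner_self_eq_one_of_norm_eq_one hβ, inner_self_eq_one_of_norm_eq_one hρ,
          mul_one, mul_one]
    _ = ip (ψ ⊗ₜ[ℂ] (β ⊗ₜ[ℂ] ρ)) (ψ' ⊗ₜ[ℂ] (β ⊗ₜ[ℂ] ρ)) := (hip _ _ _ _ _ _).symm
    _ = ip (U (ψ ⊗ₜ[ℂ] (β ⊗ₜ[ℂ] ρ))) (U (ψ' ⊗ₜ[ℂ] (β ⊗ₜ[ℂ] ρ))) := (hU _ _).symm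
    _ = ⟪ψ, ψ'⟫ ^ 2 * ⟪k, k'⟫ := by rw [hc, hc', hip, sq]

/-- If `U : H ⊗ H ⊗ K → H ⊗ H ⊗ K` is a linear isometry (with respect to the induced
inner product `ip` on the tensor product) with `U (ψ ⊗ β ⊗ ρ) = ψ ⊗ ψ ⊗ k` and
`U (ψ̃ ⊗ β ⊗ ρ) = ψ̃ ⊗ ψ̃ ⊗ k̃`, then `⟪ψ, ψ̃⟫ = ⟪ψ, ψ̃⟫² ⟪k, k̃⟫`. -/
theorem cloning_inner_product_identity
    {H : Type*} [NormedAddCommGroup H] [InnerProductSpace ℂ H]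
    {K : Type*} [NormedAddCommGroup K] [InnerProductSpace ℂ K]
    (U : (H ⊗[ℂ] (H ⊗[ℂ] K)) →ₗ[ℂ] (H ⊗[ℂ] (H ⊗[ℂ] K)))
    (ip : (H ⊗[ℂ] (H ⊗[ℂ] K)) → (H ⊗[ℂ] (H ⊗[ℂ] K)) → ℂ)
    (hip : ∀ a b a' b' : H, ∀ c c' : K,
      ip (a ⊗ₜ[ℂ] (b ⊗ₜ[ℂ] c)) (a' ⊗ₜ[ℂ] (b' ⊗ₜ[ℂ] c')) = ⟪a, a'⟫ * ⟪b, b'⟫ * ⟪c, c'⟫)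
    (hU : ∀ s t, ip (U s) (U t) = ip s t)
    (ψ ψ' β : H) (ρ k k' : K)
    (hψ : ‖ψ‖ = 1) (hψ' : ‖ψ'‖ = 1) (hβ : ‖β‖ = 1)
    (hρ : ‖ρ‖ = 1) (hk : ‖k‖ = 1) (hk' : ‖k'‖ = 1)
    (hc : U (ψ ⊗ₜ[ℂ] (β ⊗ₜ[ℂ] ρ)) = ψ ⊗ₜ[ℂ] (ψ ⊗ₜ[ℂ] k))
    (hc' : U (ψ' ⊗ₜ[ℂ] (β ⊗ₜ[ℂ] ρ)) = ψ' ⊗ₜ[ℂ] (ψ' ⊗ₜ[ℂ] k')) :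
    ⟪ψ, ψ'⟫ = ⟪ψ, ψ'⟫ ^ 2 * ⟪k, k'⟫ :=
  cloning_inner_product_identity_general U ip hip hU ψ ψ' β ρ k k' hβ hρ hc hc'
end

section
/- Let (V, ω) be a symplectic vector space and let φ : V ⊕ V ⊕ W → V ⊕ V ⊕ W be linear and symplectic for ω ⊕ ω ⊕ σ, where (W, σ) is a symplectic vector space, with φ(x, b, r) − φ(0, b, r) = (x, x, Fx) for all x ∈ V and some linear F : V → W. Then σ(Fv, Fṽ) = −ω(v, ṽ) for all v, ṽ ∈ V. -/
/-! Linearity turns the cloning condition into `φ (x, 0, 0) = (x, x, F x)`. Evaluating the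
preserved form `ω ⊕ ω ⊕ σ` on `(v, 0, 0)` and `(ṽ, 0, 0)` then gives
`2 ω v ṽ + σ (F v) (F ṽ) = ω v ṽ`: the ancilla has to absorb one copy of `ω`, with the
opposite sign. -/

theorem LinearMap.map_sub_map_zero_fst {R M N P : Type*} [Ring R] [AddCommGroup M]
    [AddCommGroup N] [AddCommGroup P] [Module R M] [Module R N] [Module R P]
    (f : M × N →ₗ[R] P) (x : M) (y : N) : f (x, y) - f (0, y) = f (x, 0) := by
  rw [← map_sub, Prod.mk_sub_mk, sub_zero, sub_self]

theorem linear_cloning_ancilla_anti_symplectic_general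
    {V : Type*} [AddCommGroup V] [Module ℝ V]
    {W : Type*} [AddCommGroup W] [Module ℝ W]
    (ω : V →ₗ[ℝ] V →ₗ[ℝ] ℝ)
    (σ : W →ₗ[ℝ] W →ₗ[ℝ] ℝ)
    (b : V) (r : W)
    (φ : (V × V × W) →ₗ[ℝ] (V × V × W))
    (hsymp : ∀ u w : V × V × W,
      ω (φ u).1 (φ w).1 + ω (φ u).2.1 (φ w).2.1 + σ (φ u).2.2 (φ w).2.2
        = ω u.1 w.1 + ω u.2.1 w.2.1 + σ u.2.2 w.2.2)
    (F : V →ₗ[ℝ] W)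
    (hF : ∀ x : V, φ (x, b, r) - φ (0, b, r) = (x, x, F x)) :
    ∀ v v' : V, σ (F v) (F v') = -ω v v' := by
  have hclone (x : V) : φ (x, 0, 0) = (x, x, F x) := by
    rw [← hF x, φ.map_sub_map_zero_fst x (b, r)]
    rfl
  intro v v'
  have h := hsymp (v, 0, 0) (v', 0, 0)
  simp only [hclone, map_zero] at h
  linarith

/-- If `φ : V ⊕ V ⊕ W → V ⊕ V ⊕ W` is linear and symplectic for `ω ⊕ ω ⊕ σ`, and
`φ (x, b, r) − φ (0, b, r) = (x, x, F x)` for all `x ∈ V` with `F : V → W` linear, then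
`σ (F v) (F ṽ) = −ω v ṽ` for all `v, ṽ ∈ V`. -/
theorem linear_cloning_ancilla_anti_symplectic
    {V : Type*} [AddCommGroup V] [Module ℝ V] [FiniteDimensional ℝ V]
    {W : Type*} [AddCommGroup W] [Module ℝ W] [FiniteDimensional ℝ W]
    (ω : V →ₗ[ℝ] V →ₗ[ℝ] ℝ)
    (hωalt : ∀ v : V, ω v v = 0)
    (hωnd : ∀ v : V, (∀ w : V, ω v w = 0) → v = 0)
    (σ : W →ₗ[ℝ] W →ₗ[ℝ] ℝ)
    (hσalt : ∀ w : W, σ w w = 0)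
    (hσnd : ∀ w : W, (∀ w' : W, σ w w' = 0) → w = 0)
    (b : V) (r : W)
    (φ : (V × V × W) →ₗ[ℝ] (V × V × W))
    (hsymp : ∀ u w : V × V × W,
      ω (φ u).1 (φ w).1 + ω (φ u).2.1 (φ w).2.1 + σ (φ u).2.2 (φ w).2.2
        = ω u.1 w.1 + ω u.2.1 w.2.1 + σ u.2.2 w.2.2)
    (F : V →ₗ[ℝ] W)
    (hF : ∀ x : V, φ (x, b, r) - φ (0, b, r) = (x, x, F x)) :
    ∀ v v' : V, σ (F v) (F v') = -ω v v' :=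
  linear_cloning_ancilla_anti_symplectic_general ω σ b r φ hsymp F hF
end
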